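/- Let D be a Steiner design (a (v,k,1)-design), let B be a block of D, let x ∈ B, and set P = B \ {x} (a punctured block). Then the set I_P consisting of the points of P together with all blocks of D disjoint from P is a dominating set of the incidence graph G_D. -/

import Mathlib

open Finset

variable {α ι : Type*}

/-- The incidence (Levi) graph of the block family `B` indexed by `ι` over point set `α`:
a bipartite graph where point `p` is adjacent to block `i` iff `p ∈ B i`. -/
def incGraph (B : ι → Finset α) : SimpleGraph (α ⊕ ι) where
  Adj x y :=
    (∃ p i, x = Sum.inl p ∧ y = Sum.inr i ∧ p ∈ B i) ∨
    (∃ p i, x = Sum.inr i ∧ y = Sum.inl p ∧ p ∈ B i)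
  symm := by
    constructor
    rintro x y (⟨p, i, rfl, rfl, h⟩ | ⟨p, i, rfl, rfl, h⟩)
    · exact Or.inr ⟨p, i, rfl, rfl, h⟩
    · exact Or.inl ⟨p, i, rfl, rfl, h⟩
  loopless := by
    constructor
    rintro x (⟨p, i, rfl, h, -⟩ | ⟨p, i, rfl, h, -⟩) <;> simp at h

/-- A dominating set of vertices in a graph: every vertex not in `S` has a neighbour in `S`. -/
def IsDomSet {V : Type*} (G : SimpleGraph V) (S : Finset V) : Prop :=
  ∀ v ∉ S, ∃ s ∈ S, G.Adj v s

/-- The domination number of a graph: the minimum size of a dominating set. -/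
noncomputable def domNum {V : Type*} (G : SimpleGraph V) : ℕ :=
  sInf {n | ∃ S : Finset V, IsDomSet G S ∧ S.card = n}

/-- The neat set `I_P` associated with a set of points `P`: the points of `P` together with
all blocks disjoint from `P`. -/
def neatSet [DecidableEq α] [DecidableEq ι] [Fintype ι] (B : ι → Finset α)
    (P : Finset α) : Finset (α ⊕ ι) :=
  P.image Sum.inl ∪ (Finset.univ.filter fun i => ∀ p ∈ P, p ∉ B i).image Sum.inr

section LinearSpace

variable {B : ι → Finset α}

theorem incGraph_adj_inl_inr {p : α} {i : ι} :
    (incGraph B).Adj (Sum.inl p) (Sum.inr i) ↔ p ∈ B i := by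
  simp [incGraph]

theorem incGraph_adj_inr_inl {p : α} {i : ι} :
    (incGraph B).Adj (Sum.inr i) (Sum.inl p) ↔ p ∈ B i := by
  simp [incGraph]

theorem exists_block_disjoint_erase [DecidableEq α]
    (hline : ∀ a b, a ≠ b → ∃! i, a ∈ B i ∧ b ∈ B i)
    {i₀ : ι} {x w : α} (hx : x ∈ B i₀) (hw : w ∉ B i₀) :
    ∃ i, x ∈ B i ∧ w ∈ B i ∧ Disjoint ((B i₀).erase x) (B i) := by
  obtain ⟨i, ⟨hxi, hwi⟩, -⟩ := hline x w (ne_of_mem_of_not_mem hx hw)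
  refine ⟨i, hxi, hwi, Finset.disjoint_left.mpr fun q hq hqi => hw ?_⟩
  obtain ⟨hqx, hq₀⟩ := Finset.mem_erase.mp hq
  obtain ⟨j, -, hj⟩ := hline x q (Ne.symm hqx)
  rwa [hj i₀ ⟨hx, hq₀⟩, ← hj i ⟨hxi, hqi⟩]

variable [DecidableEq α] [DecidableEq ι] [Fintype ι]

theorem mem_neatSet_inl {P : Finset α} {p : α} : Sum.inl p ∈ neatSet B P ↔ p ∈ P := by
  simp [neatSet]

theorem mem_neatSet_inr {P : Finset α} {i : ι} :
    Sum.inr i ∈ neatSet B P ↔ Disjoint P (B i) := by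
  simp [neatSet, Finset.disjoint_left]

theorem isDomSet_neatSet_erase
    (hline : ∀ a b, a ≠ b → ∃! i, a ∈ B i ∧ b ∈ B i)
    {i₀ : ι} {x z : α} (hx : x ∈ B i₀) (hz : z ∉ B i₀) :
    IsDomSet (incGraph B) (neatSet B ((B i₀).erase x)) := by
  rintro (p | i) hp
  · -- `p` is `x` or lies off `B i₀`; either way a block through `x` and a point off `B i₀` works
    have hpw : ∃ w ∉ B i₀, p = x ∨ p = w := by
      by_cases hpx : p = x
      · exact ⟨z, hz, Or.inl hpx⟩
      · exact ⟨p, fun h => hp (mem_neatSet_inl.mpr (Finset.mem_erase.mpr ⟨hpx, h⟩)),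
          Or.inr rfl⟩
    obtain ⟨w, hw, rfl | rfl⟩ := hpw <;>
    obtain ⟨i, hxi, hwi, hdisj⟩ := exists_block_disjoint_erase hline hx hw
    · exact ⟨Sum.inr i, mem_neatSet_inr.mpr hdisj, incGraph_adj_inl_inr.mpr hxi⟩
    · exact ⟨Sum.inr i, mem_neatSet_inr.mpr hdisj, incGraph_adj_inl_inr.mpr hwi⟩
  · obtain ⟨q, hqP, hqi⟩ := Finset.not_disjoint_iff.mp (mt mem_neatSet_inr.mpr hp)
    exact ⟨Sum.inl q, mem_neatSet_inl.mpr hqP, incGraph_adj_inr_inl.mpr hqi⟩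

end LinearSpace

theorem stmt7_general [Fintype α] [Fintype ι] [DecidableEq α] [DecidableEq ι]
    (B : ι → Finset α) (v k : ℕ)
    (hv : Fintype.card α = v)
    (hkv : k < v)
    (hblock : ∀ i, (B i).card = k)
    (hpair : ∀ x y : α, x ≠ y →
      (Finset.univ.filter fun i => x ∈ B i ∧ y ∈ B i).card = 1)
    (i₀ : ι) (x : α) (hx : x ∈ B i₀) :
    IsDomSet (incGraph B) (neatSet B ((B i₀).erase x)) := by
  have hline : ∀ a b, a ≠ b → ∃! i, a ∈ B i ∧ b ∈ B i := fun a b hab =>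
    (Fintype.existsUnique_iff_card_one _).mpr (hpair a b hab)
  obtain ⟨z, -, hz⟩ := Finset.exists_mem_notMem_of_card_lt_card (s := B i₀) (t := Finset.univ)
    (by rw [hblock, Finset.card_univ, hv]; exact hkv)
  exact isDomSet_neatSet_erase hline hx hz

/-- In a Steiner design (`λ = 1`), for any block `B i₀` and point
`x ∈ B i₀`, letting `P = B i₀ \ {x}` be the punctured block, the set `I_P` consisting
of the points of `P` together with all blocks disjoint from `P` is dominating. -/
theorem stmt7 [Fintype α] [Fintype ι] [DecidableEq α] [DecidableEq ι]
    (B : ι → Finset α) (v k : ℕ)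
    (hv : Fintype.card α = v)
    (hk2 : 2 ≤ k) (hkv : k < v)
    (hblock : ∀ i, (B i).card = k)
    (hpair : ∀ x y : α, x ≠ y →
      (Finset.univ.filter fun i => x ∈ B i ∧ y ∈ B i).card = 1)
    (i₀ : ι) (x : α) (hx : x ∈ B i₀) :
    IsDomSet (incGraph B) (neatSet B ((B i₀).erase x)) :=
  stmt7_general B v k hv hkv hblock hpair i₀ x hx
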